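/- arXiv:1604.01421 — 3 statements merged into one kernel-verified Lean document; each statement's English description precedes it below -/
import Mathlib

section
/- Let X₁ and X₂ be finite sets, and let ε, δ_L, δ_R, δ_{2,L}, δ_{2,R}, α_L, α_R ∈ [0,1] satisfy (1-δ_L) ≤ (1-α_L)(1-δ_{2,L}) and (1+δ_R) ≥ (1+α_R)(1+δ_{2,R}). Suppose s₁ is a real with (1-δ_L)·|X₁| ≤ s₁ ≤ (1+δ_R)·|X₁|, and t is a real with (1-α_L)(1-δ_{2,L})·|X₂ - X₁| - ε·|X₂| ≤ t ≤ (1+α_R)(1+δ_{2,R})·|X₂ - X₁| + ε·|X₂|. Then (1 - δ_L - ε)·|X₁ ∪ X₂| ≤ s₁ + t ≤ (1 + δ_R + ε)·|X₁ ∪ X₂|. -/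
theorem stmt_6 {α : Type*} [DecidableEq α] (X₁ X₂ : Finset α)
    (ε δL δR δ2L δ2R αL αR : ℝ)
    (hε : ε ∈ Set.Icc (0:ℝ) 1) (hδL : δL ∈ Set.Icc (0:ℝ) 1) (hδR : δR ∈ Set.Icc (0:ℝ) 1)
    (hδ2L : δ2L ∈ Set.Icc (0:ℝ) 1) (hδ2R : δ2R ∈ Set.Icc (0:ℝ) 1)
    (hαL : αL ∈ Set.Icc (0:ℝ) 1) (hαR : αR ∈ Set.Icc (0:ℝ) 1)
    (hcond1 : 1 - δL ≤ (1 - αL) * (1 - δ2L)) (hcond2 : 1 + δR ≥ (1 + αR) * (1 + δ2R))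
    (s₁ t : ℝ)
    (hs₁1 : (1 - δL) * X₁.card ≤ s₁) (hs₁2 : s₁ ≤ (1 + δR) * X₁.card)
    (ht1 : (1 - αL) * (1 - δ2L) * ((X₂ \ X₁).card : ℝ) - ε * X₂.card ≤ t)
    (ht2 : t ≤ (1 + αR) * (1 + δ2R) * ((X₂ \ X₁).card : ℝ) + ε * X₂.card) :
    (1 - δL - ε) * ((X₁ ∪ X₂).card : ℝ) ≤ s₁ + t ∧
      s₁ + t ≤ (1 + δR + ε) * ((X₁ ∪ X₂).card : ℝ) := by
  have hU : ((X₁ ∪ X₂).card : ℝ) = X₁.card + (X₂ \ X₁).card := by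
    rw [Finset.union_comm, ← Finset.card_sdiff_add_card]; push_cast; ring
  have h2 : (X₂.card : ℝ) ≤ ((X₁ ∪ X₂).card : ℝ) := by
    exact_mod_cast Finset.card_le_card (Finset.subset_union_right)
  have hd : (0:ℝ) ≤ ((X₂ \ X₁).card : ℝ) := by positivity
  obtain ⟨hε0, hε1⟩ := hε
  constructor <;> nlinarith [hU, h2, hd, hδL.1, hδR.1]
end

section
/- Let A₁, …, A_n be finite sets, k ≤ n, and suppose A₁ has maximum cardinality among them. Define A*_j = A_j ∪ P_j where P_j ⊆ A₁ \ A_j is chosen so that |A*_j| = |A₁| for each j (and A*_1 = A₁). For any indices i₁ < ⋯ < i_k with 1 ∉ {i₁,…,i_k}, let j minimize |A*_{i_j} \ ⋃_{v≠j} A*_{i_v}|. Then |A₁ ∪ ⋃_{v≠j} A_{i_v}| ≥ (1 - 1/k)·|A*_{i_1} ∪ ⋯ ∪ A*_{i_k}|. -/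
/-!
Let `S` be the union of the padded sets and let `U v` be the part of `S` covered only by the
`v`-th padded set. The `U v` are disjoint subsets of `S`, so the smallest one, `U j`, has at most
`|S| / k` elements, and dropping the `j`-th set leaves `S \ U j`, of size at least `(1 - 1/k)|S|`.
Since each padded set lies in `A_{i_v} ∪ A₁`, what is left is covered by `A₁` together with the
unpadded sets `A_{i_v}`, `v ≠ j`.
-/

open Finset

namespace Finset

variable {ι α : Type*} [Fintype ι] [DecidableEq ι] [DecidableEq α]

def uniquePart (B : ι → Finset α) (v : ι) : Finset α :=
  B v \ (univ.erase v).biUnion B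

theorem pairwiseDisjoint_uniquePart (B : ι → Finset α) :
    ((univ : Finset ι) : Set ι).PairwiseDisjoint (uniquePart B) := by
  intro v _ w _ hvw
  rw [Function.onFun, Finset.disjoint_left]
  intro x hxv hxw
  exact (mem_sdiff.1 hxw).2 <|
    mem_biUnion.2 ⟨v, mem_erase.2 ⟨hvw, mem_univ v⟩, (mem_sdiff.1 hxv).1⟩

theorem uniquePart_subset_biUnion (B : ι → Finset α) (v : ι) :
    uniquePart B v ⊆ univ.biUnion B :=
  sdiff_subset.trans (subset_biUnion_of_mem B (mem_univ v))

theorem sum_card_uniquePart_le (B : ι → Finset α) :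
    ∑ v, #(uniquePart B v) ≤ #(univ.biUnion B) := by
  rw [← card_biUnion (pairwiseDisjoint_uniquePart B)]
  exact card_le_card (biUnion_subset.2 fun v _ => uniquePart_subset_biUnion B v)

theorem card_biUnion_eq_card_biUnion_erase_add_card_uniquePart (B : ι → Finset α) (j : ι) :
    #(univ.biUnion B) = #((univ.erase j).biUnion B) + #(uniquePart B j) := by
  have hsplit : univ.biUnion B = (univ.erase j).biUnion B ∪ uniquePart B j := by
    rw [uniquePart, union_sdiff_self_eq_union, union_comm, ← biUnion_insert,
      insert_erase (mem_univ j)]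
  rw [hsplit]
  exact card_union_of_disjoint disjoint_sdiff

theorem one_sub_inv_card_mul_card_biUnion_le (B : ι → Finset α) (j : ι)
    (hmin : ∀ v, #(uniquePart B j) ≤ #(uniquePart B v)) :
    (1 - 1 / (Fintype.card ι : ℝ)) * #(univ.biUnion B) ≤ #((univ.erase j).biUnion B) := by
  have hm : (0 : ℝ) < Fintype.card ι := by exact_mod_cast Fintype.card_pos_iff.2 ⟨j⟩
  have hunique : (Fintype.card ι : ℝ) * #(uniquePart B j) ≤ #(univ.biUnion B) := by
    have hsum := (sum_le_sum fun v _ => hmin v).trans (sum_card_uniquePart_le B)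
    rw [sum_const, card_univ, smul_eq_mul] at hsum
    exact_mod_cast hsum
  have hsplit : (#(univ.biUnion B) : ℝ) = #((univ.erase j).biUnion B) + #(uniquePart B j) := by
    exact_mod_cast card_biUnion_eq_card_biUnion_erase_add_card_uniquePart B j
  have hfrac : (#(uniquePart B j) : ℝ) ≤ #(univ.biUnion B) / Fintype.card ι := by
    rw [le_div_iff₀ hm]
    linarith
  rw [sub_mul, one_div_mul_eq_div, one_mul]
  linarith

end Finset

theorem stmt_9_general {α : Type*} [DecidableEq α] (n k : ℕ) (hn : 0 < n)
    (A P : Fin n → Finset α)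
    (hP : ∀ j, P j ⊆ A ⟨0, hn⟩ \ A j)
    (i : Fin k → Fin n)
    (j : Fin k)
    (hmin : ∀ v : Fin k,
      ((A (i j) ∪ P (i j)) \
          ((Finset.univ.erase j).biUnion fun v' => A (i v') ∪ P (i v'))).card ≤
        ((A (i v) ∪ P (i v)) \
          ((Finset.univ.erase v).biUnion fun v' => A (i v') ∪ P (i v'))).card) :
    (1 - 1 / (k : ℝ)) *
        ((Finset.univ.biUnion fun v : Fin k => A (i v) ∪ P (i v)).card : ℝ) ≤
      (((A ⟨0, hn⟩ ∪ ((Finset.univ.erase j).biUnion fun v' => A (i v'))).card : ℝ)) := by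
  have hdrop := one_sub_inv_card_mul_card_biUnion_le (fun v => A (i v) ∪ P (i v)) j hmin
  rw [Fintype.card_fin] at hdrop
  have hcover : ((univ.erase j).biUnion fun v => A (i v) ∪ P (i v)) ⊆
      A ⟨0, hn⟩ ∪ (univ.erase j).biUnion fun v => A (i v) := by
    intro x hx
    obtain ⟨v, hv, hxv⟩ := mem_biUnion.1 hx
    rcases mem_union.1 hxv with hA | hPv
    · exact mem_union_right _ (mem_biUnion.2 ⟨v, hv, hA⟩)
    · exact mem_union_left _ (mem_sdiff.1 (hP (i v) hPv)).1
  exact hdrop.trans (by exact_mod_cast card_le_card hcover)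

theorem stmt_9 {α : Type*} [DecidableEq α] (n k : ℕ) (hk : 0 < k) (hkn : k ≤ n) (hn : 0 < n)
    (A P : Fin n → Finset α)
    (hmax : ∀ j, (A j).card ≤ (A ⟨0, hn⟩).card)
    (hP : ∀ j, P j ⊆ A ⟨0, hn⟩ \ A j)
    (hcard : ∀ j, (A j ∪ P j).card = (A ⟨0, hn⟩).card)
    (hP0 : P ⟨0, hn⟩ = ∅)
    (i : Fin k → Fin n) (hiinj : Function.Injective i) (hi0 : ∀ v, (i v : ℕ) ≠ 0)
    (j : Fin k)
    (hmin : ∀ v : Fin k,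
      ((A (i j) ∪ P (i j)) \
          ((Finset.univ.erase j).biUnion fun v' => A (i v') ∪ P (i v'))).card ≤
        ((A (i v) ∪ P (i v)) \
          ((Finset.univ.erase v).biUnion fun v' => A (i v') ∪ P (i v'))).card) :
    (1 - 1 / (k : ℝ)) *
        ((Finset.univ.biUnion fun v : Fin k => A (i v) ∪ P (i v)).card : ℝ) ≤
      (((A ⟨0, hn⟩ ∪ ((Finset.univ.erase j).biUnion fun v' => A (i v'))).card : ℝ)) :=
  stmt_9_general n k hn A P hP i j hmin
end

section
/- Let u ≥ 1 be a real number, d = 200·u² (an integer), and m a positive integer divisible by d with 200·u·v < m for some real v ≥ 0. Suppose a real number z satisfies both m/u - v ≤ z ≤ u·(m/d) + v (i.e., z is a (u,v)-approximation of m and of m/d simultaneously). Then a contradiction follows; formally: there is no real z with m/u - v ≤ u·(m/d) + v under these hypotheses. -/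
theorem mul_div_add_lt_div_sub {u d m v : ℝ} (hu : 0 < u) (hd : 2 * u ^ 2 ≤ d) (hm : 0 ≤ m)
    (hmv : 4 * u * v < m) : u * (m / d) + v < m / u - v := by
  have hd₀ : 0 < 2 * u ^ 2 := by positivity
  have hshrink : u * (m / d) ≤ m / (2 * u) :=
    calc u * (m / d) ≤ u * (m / (2 * u ^ 2)) := by gcongr
      _ = m / (2 * u) := by field_simp
  have hgap : 2 * v < m / (2 * u) := by
    rw [lt_div_iff₀ (by positivity)]
    linarith
  have hhalf : m / u = m / (2 * u) + m / (2 * u) := by field_simp; ring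
  linarith

theorem stmt_17_general (u : ℝ) (hu : 1 ≤ u) (d : ℕ) (hd : (d : ℝ) = 200 * u ^ 2)
    (m : ℕ) (v : ℝ) (hv : 0 ≤ v)
    (hmv : 200 * u * v < m) :
    ¬ ∃ z : ℝ, (m : ℝ) / u - v ≤ z ∧ z ≤ u * ((m : ℝ) / d) + v := by
  rintro ⟨z, hz_lower, hz_upper⟩
  have hu₀ : 0 < u := one_pos.trans_le hu
  have hd_large : 2 * u ^ 2 ≤ d := by nlinarith
  have huv : 0 ≤ u * v := mul_nonneg hu₀.le hv
  have hmv' : 4 * u * v < m := by linarith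
  exact (mul_div_add_lt_div_sub hu₀ hd_large m.cast_nonneg hmv').not_ge (hz_lower.trans hz_upper)

theorem stmt_17 (u : ℝ) (hu : 1 ≤ u) (d : ℕ) (hd : (d : ℝ) = 200 * u ^ 2)
    (m : ℕ) (hm : 0 < m) (hdvd : d ∣ m) (v : ℝ) (hv : 0 ≤ v)
    (hmv : 200 * u * v < m) :
    ¬ ∃ z : ℝ, (m : ℝ) / u - v ≤ z ∧ z ≤ u * ((m : ℝ) / d) + v :=
  stmt_17_general u hu d hd m v hv hmv
end
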